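/- Let a ∈ ℕ, b ∈ ℤ, g := gcd(a,b), a' := a/g, b' := b/g, and let q₁,…,q_s be the distinct primes dividing g but not a'. Then the following are equivalent: (1) there are infinitely many positive integers n > -b/a with rad(a'n+b') | g; (2) there exists a positive integer n > -b/a with rad(a'n+b') | g and a'n+b' ≥ 2; (3) there exist α₁,…,α_s ∈ ℕ₀ with α₁+⋯+α_s > 0 and q₁^{α₁}⋯q_s^{α_s} ≡ b' (mod a'); (4) rad(g) ∤ a' and there exist α₁,…,α_s ∈ ℕ₀ with q₁^{α₁}⋯q_s^{α_s} ≡ b' (mod a'). -/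

import Mathlib

/-!
Write `A = a/g`, `B = b/g` and `Q` for the primes dividing `g` but not `A`. As `gcd(A, B) = 1`, no
prime factor of `m = An + B` divides `A`, so `rad m ∣ g` says that `m` is `Q`-smooth: `n ↦ An + B`
identifies `Rset a b` with the `Q`-smooth `m > B` with `m ≡ B (mod A)`. By Euler's theorem,
multiplying such an `m` by `q ^ (k φ(A))` with `q ∈ Q` stays in that class, so one such `m` together
with one `q ∈ Q` gives infinitely many, and an `m ≥ 2` supplies its own `q`. Conditions (3) and (4)
are the same statements with `m` written as `∏ qᵢ ^ αᵢ`.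
-/

/-- The radical (squarefree kernel) of a natural number. -/
def rad (n : ℕ) : ℕ := ∏ p ∈ n.primeFactors, p

/-- The set of positive integers `n` with `a'n + b' > 0` and `rad(a'n + b') ∣ g`,
where `g = gcd(a,b)`, `a' = a/g`, `b' = b/g`; its cardinality is `ρ(a,b)`. -/
def Rset (a : ℕ) (b : ℤ) : Set ℕ :=
  {n : ℕ | 0 < n ∧ 0 < (↑(a / Int.gcd a b) : ℤ) * n + b / (Int.gcd a b : ℤ) ∧
    rad ((↑(a / Int.gcd a b) * n + b / (Int.gcd a b : ℤ)).toNat) ∣ Int.gcd a b}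

open Finset

theorem Int.ModEq.pow_totient {x n : ℕ} (h : x.Coprime n) : (x : ℤ) ^ n.totient ≡ 1 [ZMOD n] := by
  exact_mod_cast Int.natCast_modEq_iff.mpr (Nat.ModEq.pow_totient h)

theorem Nat.primeFactors_pow_subset (n k : ℕ) : (n ^ k).primeFactors ⊆ n.primeFactors := by
  rcases k.eq_zero_or_pos with rfl | hk
  · simp
  · rw [Nat.primeFactors_pow n hk.ne']

theorem Nat.coprime_of_intModEq {A m : ℕ} {B : ℤ} (hAB : IsCoprime (A : ℤ) B)
    (h : (m : ℤ) ≡ B [ZMOD A]) : m.Coprime A := by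
  obtain ⟨k, hk⟩ := h.dvd
  have hm : (m : ℤ) = B + A * -k := by linarith
  rw [← Nat.isCoprime_iff_coprime, hm]
  exact (hAB.add_mul_left_right (-k)).symm

theorem rad_dvd_iff {n d : ℕ} : rad n ∣ d ↔ ∀ p ∈ n.primeFactors, p ∣ d :=
  ⟨fun h _ hp => (dvd_prod_of_mem _ hp).trans h,
    prod_primes_dvd d fun _ hp => (Nat.prime_of_mem_primeFactors hp).prime⟩

abbrev coprimePrimeFactors (g A : ℕ) : Finset ℕ :=
  g.primeFactors.filter fun p => ¬ p ∣ A

theorem not_rad_dvd_iff_coprimePrimeFactors_nonempty {g A : ℕ} :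
    ¬ rad g ∣ A ↔ (coprimePrimeFactors g A).Nonempty := by
  simp [rad_dvd_iff, filter_nonempty_iff, and_assoc]

theorem rad_dvd_iff_primeFactors_subset_coprimePrimeFactors {m g A : ℕ} (hg : g ≠ 0)
    (hmA : m.Coprime A) :
    rad m ∣ g ↔ m.primeFactors ⊆ coprimePrimeFactors g A := by
  simp only [rad_dvd_iff, subset_iff, mem_filter, Nat.mem_primeFactors]
  refine forall_congr' fun p => ⟨fun h hp => ⟨⟨hp.1, h hp, hg⟩, ?_⟩, fun h hp => (h hp).1.2.1⟩
  exact (Nat.Prime.coprime_iff_not_dvd hp.1).mp (hmA.coprime_dvd_left hp.2.1)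

theorem prime_and_coprime_of_mem_coprimePrimeFactors {g A q : ℕ}
    (hq : q ∈ coprimePrimeFactors g A) : q.Prime ∧ q.Coprime A := by
  obtain ⟨hq, hqA⟩ := mem_filter.mp hq
  have hq := Nat.prime_of_mem_primeFactors hq
  exact ⟨hq, (Nat.Prime.coprime_iff_not_dvd hq).mpr hqA⟩

section ProdPow

variable {Q : Finset ℕ} (hQ : ∀ q ∈ Q, q.Prime)
include hQ

theorem exists_prod_pow_eq_iff {m : ℕ} :
    (∃ α : ℕ → ℕ, ∏ q ∈ Q, q ^ α q = m) ↔ m ≠ 0 ∧ m.primeFactors ⊆ Q := by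
  constructor
  · rintro ⟨α, rfl⟩
    refine ⟨prod_ne_zero_iff.mpr fun q hq => pow_ne_zero _ (hQ q hq).ne_zero, fun p hp => ?_⟩
    obtain ⟨hp, hpd, -⟩ := Nat.mem_primeFactors.mp hp
    obtain ⟨q, hq, hpq⟩ := hp.prime.exists_mem_finset_dvd hpd
    rwa [(Nat.prime_dvd_prime_iff_eq hp (hQ q hq)).mp (hp.dvd_of_dvd_pow hpq)]
  · rintro ⟨hm, hmQ⟩
    refine ⟨m.factorization, ?_⟩
    conv_rhs => rw [Nat.prod_primeFactors_pow_factorization hm]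
    refine (prod_subset hmQ fun p _ hp => ?_).symm
    rw [Finsupp.notMem_support_iff.mp (by rwa [Nat.support_factorization]), pow_zero]

theorem two_le_prod_pow_iff (α : ℕ → ℕ) : 2 ≤ ∏ q ∈ Q, q ^ α q ↔ 0 < ∑ q ∈ Q, α q := by
  have hne : ∏ q ∈ Q, q ^ α q ≠ 0 :=
    prod_ne_zero_iff.mpr fun q hq => pow_ne_zero _ (hQ q hq).ne_zero
  rw [show 2 ≤ ∏ q ∈ Q, q ^ α q ↔ ∏ q ∈ Q, q ^ α q ≠ 1 by omega, Nat.pos_iff_ne_zero, Ne, Ne,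
    prod_eq_one_iff, sum_eq_zero_iff]
  exact not_congr (forall₂_congr fun q hq => by simp [(hQ q hq).ne_one])

end ProdPow

def smoothResidues (A : ℕ) (B : ℤ) (Q : Finset ℕ) : Set ℕ :=
  {m | m ≠ 0 ∧ m.primeFactors ⊆ Q ∧ (m : ℤ) ≡ B [ZMOD A]}

section SmoothResidues

variable {A : ℕ} {B : ℤ} {Q : Finset ℕ}

theorem exists_prod_pow_modEq_iff (hQ : ∀ q ∈ Q, q.Prime) :
    (∃ α : ℕ → ℕ, (∏ q ∈ Q, (q : ℤ) ^ α q) ≡ B [ZMOD A]) ↔ (smoothResidues A B Q).Nonempty := by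
  constructor
  · rintro ⟨α, hα⟩
    obtain ⟨h0, hmQ⟩ := (exists_prod_pow_eq_iff hQ).mp ⟨α, rfl⟩
    exact ⟨_, h0, hmQ, by push_cast; exact hα⟩
  · rintro ⟨m, h0, hmQ, hmB⟩
    obtain ⟨α, rfl⟩ := (exists_prod_pow_eq_iff hQ).mpr ⟨h0, hmQ⟩
    exact ⟨α, by exact_mod_cast hmB⟩

theorem exists_pos_sum_prod_pow_modEq_iff (hQ : ∀ q ∈ Q, q.Prime) :
    (∃ α : ℕ → ℕ, 0 < ∑ q ∈ Q, α q ∧ (∏ q ∈ Q, (q : ℤ) ^ α q) ≡ B [ZMOD A]) ↔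
      ∃ m ∈ smoothResidues A B Q, 2 ≤ m := by
  constructor
  · rintro ⟨α, hα, hαB⟩
    obtain ⟨h0, hmQ⟩ := (exists_prod_pow_eq_iff hQ).mp ⟨α, rfl⟩
    exact ⟨_, ⟨h0, hmQ, by push_cast; exact hαB⟩, (two_le_prod_pow_iff hQ α).mpr hα⟩
  · rintro ⟨m, ⟨h0, hmQ, hmB⟩, hm2⟩
    obtain ⟨α, rfl⟩ := (exists_prod_pow_eq_iff hQ).mpr ⟨h0, hmQ⟩
    exact ⟨α, (two_le_prod_pow_iff hQ α).mp hm2, by exact_mod_cast hmB⟩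

theorem mul_pow_totient_mem_smoothResidues {m q : ℕ} (hm : m ∈ smoothResidues A B Q)
    (hq : q.Prime) (hqQ : q ∈ Q) (hqA : q.Coprime A) (k : ℕ) :
    m * q ^ (k * A.totient) ∈ smoothResidues A B Q := by
  obtain ⟨hm0, hmQ, hmB⟩ := hm
  have hq0 : q ^ (k * A.totient) ≠ 0 := pow_ne_zero _ hq.ne_zero
  refine ⟨mul_ne_zero hm0 hq0, ?_, ?_⟩
  · rw [Nat.primeFactors_mul hm0 hq0]
    refine union_subset hmQ ((Nat.primeFactors_pow_subset q _).trans ?_)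
    rwa [hq.primeFactors, singleton_subset_iff]
  · calc ((m * q ^ (k * A.totient) : ℕ) : ℤ) = m * ((q : ℤ) ^ A.totient) ^ k := by
          push_cast; rw [mul_comm k, pow_mul]
      _ ≡ B * 1 ^ k [ZMOD A] := hmB.mul ((Int.ModEq.pow_totient hqA).pow k)
      _ = B := by simp

theorem smoothResidues_infinite (hA : 0 < A) {m q : ℕ} (hm : m ∈ smoothResidues A B Q)
    (hq : q.Prime) (hqQ : q ∈ Q) (hqA : q.Coprime A) : (smoothResidues A B Q).Infinite := by
  refine Set.infinite_of_injective_forall_mem (f := fun k => m * q ^ (k * A.totient))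
    (fun k l hkl => ?_) (mul_pow_totient_mem_smoothResidues hm hq hqQ hqA)
  have hpow := Nat.eq_of_mul_eq_mul_left (Nat.pos_of_ne_zero hm.1) hkl
  exact Nat.eq_of_mul_eq_mul_right (Nat.totient_pos.mpr hA) (Nat.pow_right_injective hq.two_le hpow)

theorem smoothResidues_infinite_tfae (hA : 0 < A) (hQ : ∀ q ∈ Q, q.Prime ∧ q.Coprime A) :
    List.TFAE [(smoothResidues A B Q).Infinite, ∃ m ∈ smoothResidues A B Q, 2 ≤ m,
      Q.Nonempty ∧ (smoothResidues A B Q).Nonempty] := by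
  tfae_have 1 → 2 := fun h => h.exists_gt 1
  tfae_have 2 → 3 := by
    rintro ⟨m, hm, hm2⟩
    have hmin : m.minFac ∈ m.primeFactors :=
      Nat.mem_primeFactors.mpr ⟨Nat.minFac_prime (by omega), m.minFac_dvd, by omega⟩
    exact ⟨⟨_, hm.2.1 hmin⟩, ⟨m, hm⟩⟩
  tfae_have 3 → 1 := fun ⟨⟨q, hqQ⟩, ⟨m, hm⟩⟩ =>
    smoothResidues_infinite hA hm (hQ q hqQ).1 hqQ (hQ q hqQ).2
  tfae_finish

end SmoothResidues

def radDvdSet (A : ℕ) (B : ℤ) (g : ℕ) : Set ℕ :=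
  {n | 0 < n ∧ 0 < (A : ℤ) * n + B ∧ rad (((A : ℤ) * n + B).toNat) ∣ g}

theorem Rset_eq_radDvdSet (a : ℕ) (b : ℤ) :
    Rset a b = radDvdSet (a / Int.gcd a b) (b / Int.gcd a b) (Int.gcd a b) := rfl

section RadDvdSet

variable {A : ℕ} {B : ℤ} {g : ℕ} (hg : g ≠ 0) (hAB : IsCoprime (A : ℤ) B)
include hg hAB

theorem mem_radDvdSet_iff {n : ℕ} : n ∈ radDvdSet A B g ↔ 0 < n ∧
    ((A : ℤ) * n + B).toNat ∈ smoothResidues A B (coprimePrimeFactors g A) := by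
  rcases le_or_gt ((A : ℤ) * n + B) 0 with hle | hpos
  · simp [radDvdSet, smoothResidues, Int.toNat_of_nonpos hle, hle.not_gt]
  · have hm : (((A : ℤ) * n + B).toNat : ℤ) = A * n + B := Int.toNat_of_nonneg hpos.le
    have hmB : (((A : ℤ) * n + B).toNat : ℤ) ≡ B [ZMOD A] := by
      rw [hm, add_comm]; exact Int.modEq_add_fac_self
    have hm0 : ((A : ℤ) * n + B).toNat ≠ 0 := by omega
    simp only [radDvdSet, smoothResidues, Set.mem_ofPred_eq, hpos, hmB, hm0, ne_eq,
      not_false_eq_true, true_and, and_true,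
      rad_dvd_iff_primeFactors_subset_coprimePrimeFactors hg (Nat.coprime_of_intModEq hAB hmB)]

theorem exists_mem_radDvdSet_eq {m : ℕ}
    (hm : m ∈ smoothResidues A B (coprimePrimeFactors g A)) (hBm : B < m) :
    ∃ n ∈ radDvdSet A B g, (A : ℤ) * n + B = m := by
  obtain ⟨k, hk⟩ := hm.2.2.symm.dvd
  have hk0 : 0 < k := pos_of_mul_pos_right (hk ▸ sub_pos.mpr hBm) (Int.natCast_nonneg A)
  have hn : (A : ℤ) * k.toNat + B = m := by rw [Int.toNat_of_nonneg hk0.le]; linarith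
  refine ⟨k.toNat, (mem_radDvdSet_iff hg hAB).mpr ⟨by omega, ?_⟩, hn⟩
  rwa [hn, Int.toNat_natCast]

theorem radDvdSet_infinite_iff (hA : 0 < A) : (radDvdSet A B g).Infinite ↔
    (smoothResidues A B (coprimePrimeFactors g A)).Infinite := by
  constructor
  · intro hS
    refine Set.infinite_of_forall_exists_gt fun M => ?_
    obtain ⟨n, hn, hMn⟩ := hS.exists_gt (M + B.natAbs)
    refine ⟨_, ((mem_radDvdSet_iff hg hAB).mp hn).2, ?_⟩
    have : (n : ℤ) ≤ A * n := le_mul_of_one_le_left (by positivity) (by exact_mod_cast hA)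
    omega
  · intro hV
    refine Set.infinite_of_forall_exists_gt fun N => ?_
    obtain ⟨m, hm, hNm⟩ := hV.exists_gt (((A : ℤ) * N + B).toNat + B.natAbs)
    obtain ⟨n, hn, hnm⟩ := exists_mem_radDvdSet_eq hg hAB hm (by omega)
    refine ⟨n, hn, ?_⟩
    have : (A : ℤ) * N < A * n := by omega
    exact_mod_cast lt_of_mul_lt_mul_left this (by positivity)

theorem exists_two_le_of_mem_radDvdSet (h : ∃ n ∈ radDvdSet A B g, 2 ≤ (A : ℤ) * n + B) :
    ∃ m ∈ smoothResidues A B (coprimePrimeFactors g A), 2 ≤ m := by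
  obtain ⟨n, hn, h2⟩ := h
  exact ⟨_, ((mem_radDvdSet_iff hg hAB).mp hn).2, by omega⟩

theorem exists_mem_radDvdSet_two_le
    (hV : (smoothResidues A B (coprimePrimeFactors g A)).Infinite) :
    ∃ n ∈ radDvdSet A B g, 2 ≤ (A : ℤ) * n + B := by
  obtain ⟨m, hm, hm2⟩ := hV.exists_gt (1 + B.toNat)
  obtain ⟨n, hn, hnm⟩ := exists_mem_radDvdSet_eq hg hAB hm (by omega)
  exact ⟨n, hn, by omega⟩

theorem radDvdSet_tfae (hA : 0 < A) :
    List.TFAE [(radDvdSet A B g).Infinite, ∃ n ∈ radDvdSet A B g, 2 ≤ (A : ℤ) * n + B,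
      ∃ m ∈ smoothResidues A B (coprimePrimeFactors g A), 2 ≤ m,
      (coprimePrimeFactors g A).Nonempty ∧
        (smoothResidues A B (coprimePrimeFactors g A)).Nonempty] := by
  have hV := smoothResidues_infinite_tfae (B := B) hA fun q hq =>
    prime_and_coprime_of_mem_coprimePrimeFactors (g := g) hq
  tfae_have 1 ↔ 3 := (radDvdSet_infinite_iff hg hAB hA).trans (hV.out 0 1)
  tfae_have 2 → 3 := exists_two_le_of_mem_radDvdSet hg hAB
  tfae_have 3 → 2 := fun h => exists_mem_radDvdSet_two_le hg hAB ((hV.out 0 1).mpr h)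
  tfae_have 3 ↔ 4 := hV.out 1 2
  tfae_finish

end RadDvdSet

theorem rho_infinite_tfae (a : ℕ) (ha : 0 < a) (b : ℤ) :
    ((Rset a b).Infinite ↔
      (∃ n : ℕ, n ∈ Rset a b ∧
        2 ≤ (↑(a / Int.gcd a b) : ℤ) * n + b / (Int.gcd a b : ℤ))) ∧
    ((∃ n : ℕ, n ∈ Rset a b ∧
        2 ≤ (↑(a / Int.gcd a b) : ℤ) * n + b / (Int.gcd a b : ℤ)) ↔
      (∃ α : ℕ → ℕ,
        0 < ∑ q ∈ (Int.gcd a b).primeFactors.filter (fun p => ¬ p ∣ a / Int.gcd a b), α q ∧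
        (∏ q ∈ (Int.gcd a b).primeFactors.filter (fun p => ¬ p ∣ a / Int.gcd a b),
            (q : ℤ) ^ α q) ≡ b / (Int.gcd a b : ℤ) [ZMOD (↑(a / Int.gcd a b) : ℤ)])) ∧
    ((∃ α : ℕ → ℕ,
        0 < ∑ q ∈ (Int.gcd a b).primeFactors.filter (fun p => ¬ p ∣ a / Int.gcd a b), α q ∧
        (∏ q ∈ (Int.gcd a b).primeFactors.filter (fun p => ¬ p ∣ a / Int.gcd a b),
            (q : ℤ) ^ α q) ≡ b / (Int.gcd a b : ℤ) [ZMOD (↑(a / Int.gcd a b) : ℤ)]) ↔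
      (¬ rad (Int.gcd a b) ∣ a / Int.gcd a b ∧
        ∃ α : ℕ → ℕ,
        (∏ q ∈ (Int.gcd a b).primeFactors.filter (fun p => ¬ p ∣ a / Int.gcd a b),
            (q : ℤ) ^ α q) ≡ b / (Int.gcd a b : ℤ) [ZMOD (↑(a / Int.gcd a b) : ℤ)])) := by
  set g := Int.gcd a b
  have hg : g ≠ 0 := Int.gcd_ne_zero_left (by exact_mod_cast ha.ne')
  have hA : 0 < a / g := Nat.div_pos (Nat.le_of_dvd ha (by exact_mod_cast Int.gcd_dvd_left a b))
    (Nat.pos_of_ne_zero hg)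
  have hAB : IsCoprime ((a / g : ℕ) : ℤ) (b / g) := by
    rw [Int.isCoprime_iff_gcd_eq_one, Int.natCast_div]
    exact Int.gcd_div_gcd_div_gcd (Nat.pos_of_ne_zero hg)
  have hQ : ∀ q ∈ coprimePrimeFactors g (a / g), q.Prime := fun q hq =>
    (prime_and_coprime_of_mem_coprimePrimeFactors hq).1
  have h := radDvdSet_tfae hg hAB hA
  rw [exists_pos_sum_prod_pow_modEq_iff hQ, exists_prod_pow_modEq_iff hQ,
    not_rad_dvd_iff_coprimePrimeFactors_nonempty, Rset_eq_radDvdSet]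
  exact ⟨h.out 0 1, h.out 1 2, h.out 2 3⟩
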